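/- arXiv:1308.3370 — 2 statements merged into one kernel-verified Lean document; each statement's English description precedes it below -/
import Mathlib

section
/- Let v₁, …, v_k ∈ ℝ² (k ≥ 3) be in strictly convex position listed in cyclic order, and let 1 ≤ i < j ≤ k. Let x ∈ ℝ² be a point such that for every f with i ≤ f ≤ j−1, x lies strictly on the open side of the line through v_f and v_{f+1} that does not contain the points v_g, g ∉ {f, f+1}. Then for every f with i ≤ f ≤ j, the segment [x, v_f] intersects the convex hull conv{v₁, …, v_k} exactly in the single point v_f. -/
/-- Points of the Euclidean plane. -/
abbrev Pt := EuclideanSpace ℝ (Fin 2)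

/-- The points `v 0, …, v (k-1)` are in strictly convex position, listed in cyclic order:
for each index `i`, all points `v f` with `f ∉ {i, i+1}` (indices mod `k`) lie strictly on
one and the same open side of the line through `v i` and `v (i+1)`. -/
def StrictConvexCyclic {k : ℕ} (v : Fin k → Pt) : Prop :=
  ∀ i : Fin k, ∃ n : Pt,
    (inner ℝ n (v ⟨((i : ℕ) + 1) % k, Nat.mod_lt _ i.pos⟩ - v i) : ℝ) = 0 ∧
    ∀ f : Fin k, (f : ℕ) ≠ (i : ℕ) → (f : ℕ) ≠ ((i : ℕ) + 1) % k →
      (inner ℝ n (v f - v i) : ℝ) < 0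

/-!
A linear functional `φ` whose maximum over `S` is attained at `a`, and which is strictly larger
at `x`, is bounded by `φ a` on `conv S` but exceeds `φ a` at every point of `[x, a]` other
than `a`. For a vertex `v f` of the chain, `⟪n, ·⟫` with `n` the outer normal of an adjacent
edge of the chain is such a functional: it is constant along that edge, smaller at the other
vertices, and larger at `x` by hypothesis.
-/

open scoped RealInnerProductSpace

theorem segment_inter_convexHull_eq_singleton {E : Type*} [AddCommGroup E] [Module ℝ E]
    (φ : E →ₗ[ℝ] ℝ) {S : Set E} {a x : E} (ha : a ∈ S) (hS : ∀ p ∈ S, φ p ≤ φ a)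
    (hx : φ a < φ x) : segment ℝ x a ∩ convexHull ℝ S = {a} := by
  have hull_le : convexHull ℝ S ⊆ {p | φ p ≤ φ a} :=
    convexHull_min hS (convex_halfSpace_le φ.isLinear _)
  ext p
  constructor
  · rintro ⟨⟨s, t, hs, -, hst, rfl⟩, hp⟩
    have hφ : s * φ x + t * φ a ≤ φ a := by simpa using hull_le hp
    obtain rfl : t = 1 - s := by linarith
    obtain rfl : s = 0 := by
      by_contra hs0
      nlinarith [mul_pos (hs.lt_of_ne' hs0) (sub_pos.2 hx)]
    simp
  · rintro rfl
    exact ⟨right_mem_segment _ _ _, subset_convexHull ℝ S ha⟩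

theorem inner_le_of_supporting_edge {ι E : Type*} [NormedAddCommGroup E] [InnerProductSpace ℝ E]
    {v : ι → E} {n : E} {e e' : ι} (hedge : ⟪n, v e' - v e⟫ = 0)
    (hrest : ∀ g, g ≠ e → g ≠ e' → ⟪n, v g - v e⟫ < 0) (g : ι) : ⟪n, v g⟫ ≤ ⟪n, v e⟫ := by
  rw [inner_sub_right] at hedge
  by_cases hge : g = e
  · rw [hge]
  by_cases hge' : g = e'
  · rw [hge']; linarith
  linarith [inner_sub_right (𝕜 := ℝ) n (v g) (v e), hrest g hge hge']

/-- indices written 0-based: `i < j ≤ k-1`: if a point `x` lies, for every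
`f` with `i ≤ f ≤ j-1`, strictly on the open side of the line through `v f` and `v (f+1)`
not containing the remaining vertices, then for every `f` with `i ≤ f ≤ j` the segment
`[x, v f]` meets the convex hull of the vertices exactly in the single point `v f`. -/
theorem statement_2 {k : ℕ} (v : Fin k → Pt)
    (i j : ℕ) (hij : i < j) (hj : j < k) (x : Pt)
    (hx : ∀ f : ℕ, ∀ _hf1 : i ≤ f, ∀ _hf2 : f < j, ∃ n : Pt,
      (inner ℝ n (v ⟨f + 1, by omega⟩ - v ⟨f, by omega⟩) : ℝ) = 0 ∧
      (∀ g : Fin k, (g : ℕ) ≠ f → (g : ℕ) ≠ f + 1 →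
        (inner ℝ n (v g - v ⟨f, by omega⟩) : ℝ) < 0) ∧
      0 < (inner ℝ n (x - v ⟨f, by omega⟩) : ℝ)) :
    ∀ f : ℕ, ∀ _hf1 : i ≤ f, ∀ _hf2 : f ≤ j,
      segment ℝ x (v ⟨f, by omega⟩) ∩ convexHull ℝ (Set.range v) = {v ⟨f, by omega⟩} := by
  intro f hf1 hf2
  obtain ⟨e, hie, hej, hfe⟩ : ∃ e, i ≤ e ∧ e < j ∧ (f = e ∨ f = e + 1) := by
    rcases hf2.lt_or_eq with hfj | rfl
    · exact ⟨f, hf1, hfj, .inl rfl⟩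
    · exact ⟨f - 1, by omega, by omega, .inr (by omega)⟩
  obtain ⟨n, hedge, hrest, hxn⟩ := hx e hie hej
  have hmax := inner_le_of_supporting_edge hedge
    (fun g hg hg' => hrest g (Fin.val_ne_iff.mpr hg) (Fin.val_ne_iff.mpr hg'))
  have hvf : ⟪n, v ⟨f, by omega⟩⟫ = ⟪n, v ⟨e, by omega⟩⟫ := by
    rcases hfe with rfl | rfl
    · rfl
    · linarith [inner_sub_right (𝕜 := ℝ) n (v ⟨e + 1, by omega⟩) (v ⟨e, by omega⟩)]
  refine segment_inter_convexHull_eq_singleton (innerSL ℝ n).toLinearMap ⟨_, rfl⟩ ?_ ?_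
  · rintro _ ⟨g, rfl⟩
    simpa [hvf] using hmax g
  · simpa [hvf, inner_sub_right] using hxn
end

section
/- Let v₁, …, v_k ∈ ℝ² (k ≥ 3) be in strictly convex position listed in cyclic order. For an index f call a vector n_f ∈ ℝ² an outward normal of the edge (v_f, v_{f+1}) if ⟨n_f, v_g − v_f⟩ < 0 for every g ∉ {f, f+1} and ⟨n_f, v_{f+1} − v_f⟩ = 0. Let 1 ≤ i ≤ f ≤ j−1 ≤ k−1, let n_i, n_f, n_{j−1} be outward normals of the edges (v_i, v_{i+1}), (v_f, v_{f+1}), (v_{j−1}, v_j) respectively, and suppose n_f = α·n_i + β·n_{j−1} for some reals α, β ≥ 0. Then every point x ∈ ℝ² with ⟨n_i, x − v_i⟩ > 0 and ⟨n_{j−1}, x − v_{j−1}⟩ > 0 also satisfies ⟨n_f, x − v_f⟩ > 0. -/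
/-- `n` is an outward normal of the edge `(v f, v (f+1))`: it is orthogonal to the edge and
`⟨n, v g − v f⟩ < 0` for every vertex `v g` with `g ∉ {f, f+1}`. -/
def IsOutwardNormal {k : ℕ} (v : Fin k → Pt) (f : ℕ) (hf : f + 1 < k) (n : Pt) : Prop :=
  (inner ℝ n (v ⟨f + 1, hf⟩ - v ⟨f, by omega⟩) : ℝ) = 0 ∧
  ∀ g : Fin k, (g : ℕ) ≠ f → (g : ℕ) ≠ f + 1 →
    (inner ℝ n (v g - v ⟨f, by omega⟩) : ℝ) < 0

/-! Every vertex lies weakly behind each outward normal's supporting line, so a point beyond the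
lines of `n_i` and `n_g` is strictly beyond them also when measured from `v_f`; a nonzero
nonnegative combination of `n_i` and `n_g` then stays strictly positive on `x - v_f`. -/

namespace IsOutwardNormal

variable {k : ℕ} {v : Fin k → Pt} {f : ℕ} {hf : f + 1 < k} {n : Pt}

theorem inner_vertex_sub_nonpos (hn : IsOutwardNormal v f hf n) (h : Fin k) :
    (inner ℝ n (v h - v ⟨f, by omega⟩) : ℝ) ≤ 0 := by
  by_cases hhf : (h : ℕ) = f
  · rw [show h = ⟨f, by omega⟩ from Fin.ext hhf, sub_self, inner_zero_right]
  by_cases hhf' : (h : ℕ) = f + 1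
  · rw [show h = ⟨f + 1, hf⟩ from Fin.ext hhf']
    exact hn.1.le
  exact (hn.2 h hhf hhf').le

theorem inner_sub_vertex_pos (hn : IsOutwardNormal v f hf n) {x : Pt}
    (hx : 0 < (inner ℝ n (x - v ⟨f, by omega⟩) : ℝ)) (h : Fin k) :
    0 < (inner ℝ n (x - v h) : ℝ) := by
  have hsplit : (inner ℝ n (x - v h) : ℝ)
      = inner ℝ n (x - v ⟨f, by omega⟩) - inner ℝ n (v h - v ⟨f, by omega⟩) := by
    rw [← inner_sub_right, sub_sub_sub_cancel_right]
  linarith [hn.inner_vertex_sub_nonpos h]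

theorem ne_zero (hk : 3 ≤ k) (hn : IsOutwardNormal v f hf n) : n ≠ 0 := by
  rintro rfl
  have hfar : (f + 2) % k ≠ f ∧ (f + 2) % k ≠ f + 1 := by
    rcases Nat.lt_or_ge (f + 2) k with hlt | hge
    · rw [Nat.mod_eq_of_lt hlt]; omega
    · rw [show f + 2 = k by omega, Nat.mod_self]; omega
  simpa using hn.2 ⟨(f + 2) % k, Nat.mod_lt _ (by omega)⟩ hfar.1 hfar.2

end IsOutwardNormal

theorem inner_smul_add_smul_pos {E : Type*} [NormedAddCommGroup E] [InnerProductSpace ℝ E]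
    {p q y : E} {α β : ℝ} (hα : 0 ≤ α) (hβ : 0 ≤ β)
    (hne : α • p + β • q ≠ 0) (hp : 0 < (inner ℝ p y : ℝ)) (hq : 0 < (inner ℝ q y : ℝ)) :
    0 < (inner ℝ (α • p + β • q) y : ℝ) := by
  rw [inner_add_left, real_inner_smul_left, real_inner_smul_left]
  rcases hα.eq_or_lt with rfl | hα'
  · rcases hβ.eq_or_lt with rfl | hβ'
    · simp at hne
    · positivity
  · positivity

/-- indices written 0-based: with `g = j - 1`, the three edges are
`(v i, v (i+1))`, `(v f, v (f+1))` and `(v g, v (g+1))`, where `i ≤ f ≤ g` and `g + 1 ≤ k - 1`: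
if the outward normal `n_f` of an intermediate edge is a nonnegative combination of the outward
normals `n_i` and `n_g` of the two extreme edges, then every point `x` lying strictly beyond
both extreme edges also lies strictly beyond the intermediate edge. -/
theorem statement_3 {k : ℕ} (hk : 3 ≤ k) (v : Fin k → Pt)
    (i f g : ℕ) (hif : i ≤ f) (hfg : f ≤ g) (hg : g + 1 < k)
    (ni nf ng : Pt)
    (hni : IsOutwardNormal v i (by omega) ni)
    (hnf : IsOutwardNormal v f (by omega) nf)
    (hng : IsOutwardNormal v g hg ng)
    (α β : ℝ) (hα : 0 ≤ α) (hβ : 0 ≤ β) (hcomb : nf = α • ni + β • ng) :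
    ∀ x : Pt, 0 < (inner ℝ ni (x - v ⟨i, by omega⟩) : ℝ) →
      0 < (inner ℝ ng (x - v ⟨g, by omega⟩) : ℝ) →
      0 < (inner ℝ nf (x - v ⟨f, by omega⟩) : ℝ) := by
  intro x hxi hxg
  rw [hcomb] at hnf ⊢
  exact inner_smul_add_smul_pos hα hβ (hnf.ne_zero hk)
    (hni.inner_sub_vertex_pos hxi _) (hng.inner_sub_vertex_pos hxg _)
end
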